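/- arXiv:1912.09746 — 5 statements merged into one kernel-verified Lean document; each statement's English description precedes it below -/
import Mathlib

section
/- The spherical Bessel function j₂(x) := (3/x³ - 1/x) sin x - (3/x²) cos x (for x > 0, with j₂(0) := 0) satisfies |j₂(x)| ≤ x²/15 for all x ≥ 0. -/
open Real

/-- The second spherical Bessel function. -/
noncomputable def sphBesselJ2 (x : ℝ) : ℝ :=
  if x = 0 then 0 else (3/x^3 - 1/x) * Real.sin x - 3/x^2 * Real.cos x

private lemma aux_nonneg (f : ℝ → ℝ) (hf : ∀ x, 0 ≤ x → HasDerivAt f (deriv f x) x)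
    (h0 : f 0 = 0) (hd : ∀ x, 0 ≤ x → 0 ≤ deriv f x) : ∀ x, 0 ≤ x → 0 ≤ f x := by
  intro x hx
  have hmono : MonotoneOn f (Set.Ici 0) := by
    apply monotoneOn_of_deriv_nonneg (convex_Ici 0)
    · exact fun y hy => ((hf y hy).continuousAt).continuousWithinAt
    · intro y hy
      rw [interior_Ici] at hy
      exact ((hf y (le_of_lt hy)).differentiableAt).differentiableWithinAt
    · intro y hy
      rw [interior_Ici] at hy
      exact hd y (le_of_lt hy)
  have := hmono (Set.self_mem_Ici) (Set.mem_Ici.2 hx) hx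
  linarith [h0 ▸ this]

private lemma neg_le_sin' (x : ℝ) (hx : 0 ≤ x) : -x ≤ Real.sin x := by
  rcases le_or_gt x Real.pi with h | h
  · have := Real.sin_nonneg_of_nonneg_of_le_pi hx h
    linarith
  · have := Real.neg_one_le_sin x
    have : (1:ℝ) ≤ x := by nlinarith [Real.pi_gt_three]
    nlinarith [Real.neg_one_le_sin x]

private lemma inner_deriv (x : ℝ) :
    HasDerivAt (fun x => x^3/3 - (Real.sin x - x*Real.cos x)) (x^2 - x*Real.sin x) x := by
  have h1 := (hasDerivAt_pow 3 x).div_const 3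
  have h3 := (hasDerivAt_id x).mul (Real.hasDerivAt_cos x)
  have h2 := (Real.hasDerivAt_sin x).sub h3
  refine (h1.sub h2).congr_deriv ?_
  simp
  try ring

private lemma inner_deriv' (x : ℝ) :
    HasDerivAt (fun x => x^3/3 + (Real.sin x - x*Real.cos x)) (x^2 + x*Real.sin x) x := by
  have h1 := (hasDerivAt_pow 3 x).div_const 3
  have h3 := (hasDerivAt_id x).mul (Real.hasDerivAt_cos x)
  have h2 := (Real.hasDerivAt_sin x).sub h3
  refine (h1.add h2).congr_deriv ?_
  simp
  try ring

private lemma inner_ub : ∀ x : ℝ, 0 ≤ x → Real.sin x - x*Real.cos x ≤ x^3/3 := by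
  intro x hx
  have := aux_nonneg (fun x => x^3/3 - (Real.sin x - x*Real.cos x))
    (fun y _ => by rw [(inner_deriv y).deriv]; exact inner_deriv y)
    (by norm_num)
    (fun y hy => by
      rw [(inner_deriv y).deriv]
      nlinarith [Real.sin_le hy]) x hx
  linarith [this]

private lemma inner_lb : ∀ x : ℝ, 0 ≤ x → -(x^3/3) ≤ Real.sin x - x*Real.cos x := by
  intro x hx
  have := aux_nonneg (fun x => x^3/3 + (Real.sin x - x*Real.cos x))
    (fun y _ => by rw [(inner_deriv' y).deriv]; exact inner_deriv' y)
    (by norm_num)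
    (fun y hy => by
      rw [(inner_deriv' y).deriv]
      nlinarith [neg_le_sin' y hy]) x hx
  linarith [this]

private lemma outer_deriv (x : ℝ) :
    HasDerivAt (fun x => (3 - x^2)*Real.sin x - 3*x*Real.cos x)
      (x*Real.sin x - x^2*Real.cos x) x := by
  have h1 := ((hasDerivAt_const x (3:ℝ)).sub (hasDerivAt_pow 2 x)).mul (Real.hasDerivAt_sin x)
  have h2 := ((hasDerivAt_id x).const_mul (3:ℝ)).mul (Real.hasDerivAt_cos x)
  refine (h1.sub h2).congr_deriv ?_
  simp
  try ring

private lemma outer_deriv_ub (x : ℝ) :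
    HasDerivAt (fun x => x^5/15 - ((3 - x^2)*Real.sin x - 3*x*Real.cos x))
      (x^4/3 - (x*Real.sin x - x^2*Real.cos x)) x := by
  have h1 := (hasDerivAt_pow 5 x).div_const 15
  refine (h1.sub (outer_deriv x)).congr_deriv ?_
  simp
  try ring

private lemma outer_deriv_lb (x : ℝ) :
    HasDerivAt (fun x => x^5/15 + ((3 - x^2)*Real.sin x - 3*x*Real.cos x))
      (x^4/3 + (x*Real.sin x - x^2*Real.cos x)) x := by
  have h1 := (hasDerivAt_pow 5 x).div_const 15
  refine (h1.add (outer_deriv x)).congr_deriv ?_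
  simp
  try ring

private lemma outer_bound : ∀ x : ℝ, 0 ≤ x →
    |(3 - x^2)*Real.sin x - 3*x*Real.cos x| ≤ x^5/15 := by
  intro x hx
  have hub := aux_nonneg (fun x => x^5/15 - ((3 - x^2)*Real.sin x - 3*x*Real.cos x))
    (fun y _ => by rw [(outer_deriv_ub y).deriv]; exact outer_deriv_ub y)
    (by norm_num)
    (fun y hy => by
      rw [(outer_deriv_ub y).deriv]
      have := inner_ub y hy
      nlinarith) x hx
  have hlb := aux_nonneg (fun x => x^5/15 + ((3 - x^2)*Real.sin x - 3*x*Real.cos x))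
    (fun y _ => by rw [(outer_deriv_lb y).deriv]; exact outer_deriv_lb y)
    (by norm_num)
    (fun y hy => by
      rw [(outer_deriv_lb y).deriv]
      have := inner_lb y hy
      nlinarith) x hx
  rw [abs_le]
  constructor <;> simp at hub hlb <;> linarith

theorem sphBesselJ2_bound : ∀ x : ℝ, 0 ≤ x → |sphBesselJ2 x| ≤ x^2 / 15 := by
  intro x hx
  rcases eq_or_lt_of_le hx with h | h
  · simp [sphBesselJ2, ← h]
  · have hx0 : x ≠ 0 := ne_of_gt h
    have hx3 : (0:ℝ) < x^3 := by positivity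
    have hrw : sphBesselJ2 x = ((3 - x^2)*Real.sin x - 3*x*Real.cos x) / x^3 := by
      simp only [sphBesselJ2, if_neg hx0]
      field_simp
    rw [hrw, abs_div, abs_of_pos hx3, div_le_iff₀ hx3]
    have := outer_bound x hx
    calc |(3 - x^2)*Real.sin x - 3*x*Real.cos x| ≤ x^5/15 := this
      _ = x^2/15*x^3 := by ring
end

section
/- Let β > 0. For all x ∈ [0, β] it holds √(β² - x²) · J₁(x) ≤ x · I₁(√(β² - x²)), where J₁ is the Bessel function of the first kind of order 1 and I₁ the modified Bessel function of the first kind of order 1. -/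
open Real

/-- Bessel function of the first kind of order 1, via its power series. -/
noncomputable def besselJ1 (x : ℝ) : ℝ :=
  ∑' k : ℕ, (-1 : ℝ) ^ k * x ^ (1 + 2*k) /
    (2 ^ (1 + 2*k) * (k.factorial : ℝ) * ((k+1).factorial : ℝ))

/-- Modified Bessel function of the first kind of order 1, via its power series. -/
noncomputable def besselI1 (x : ℝ) : ℝ :=
  ∑' k : ℕ, x ^ (1 + 2*k) / (2 ^ (1 + 2*k) * (k.factorial : ℝ) * ((k+1).factorial : ℝ))

lemma c_pos (k : ℕ) : (0:ℝ) < 2 ^ (1 + 2*k) * (k.factorial : ℝ) * ((k+1).factorial : ℝ) := by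
  positivity

lemma summable_abs_bessel (x : ℝ) :
    Summable (fun k : ℕ => |x| ^ (1 + 2*k) / (2 ^ (1 + 2*k) * (k.factorial : ℝ) * ((k+1).factorial : ℝ))) := by
  have hsum : Summable (fun k : ℕ => (|x|/2) * ((x^2/4) ^ k / (k.factorial : ℝ))) :=
    (Real.summable_pow_div_factorial (x^2/4)).mul_left _
  refine Summable.of_nonneg_of_le (fun k => by positivity) (fun k => ?_) hsum
  have h1 : |x| ^ (1 + 2*k) = |x| * (x^2)^k := by
    rw [pow_add, pow_one, pow_mul, sq_abs]
  have h2 : (2:ℝ) ^ (1 + 2*k) = 2 * 4^k := by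
    rw [pow_add, pow_one, pow_mul]; norm_num
  have h3 : (|x|/2) * ((x^2/4) ^ k / (k.factorial : ℝ))
      = |x| * (x^2)^k / (2 * 4^k * (k.factorial : ℝ)) := by
    rw [div_pow]; ring
  rw [h1, h2, h3]
  have hf1 : (1:ℝ) ≤ ((k+1).factorial : ℝ) := by
    exact_mod_cast Nat.one_le_iff_ne_zero.2 (Nat.factorial_ne_zero (k+1))
  have hb : (0:ℝ) < 2 * 4^k * (k.factorial : ℝ) := by positivity
  have key : 2 * 4^k * (k.factorial : ℝ) ≤ 2 * 4^k * (k.factorial : ℝ) * ((k+1).factorial : ℝ) := by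
    nlinarith [pow_pos (by norm_num : (0:ℝ) < 4) k, (by positivity : (0:ℝ) < (k.factorial : ℝ))]
  exact div_le_div_of_nonneg_left (by positivity) hb key

lemma summable_besselJ1 (x : ℝ) :
    Summable (fun k : ℕ => (-1:ℝ) ^ k * x ^ (1 + 2*k) /
      (2 ^ (1 + 2*k) * (k.factorial : ℝ) * ((k+1).factorial : ℝ))) := by
  refine Summable.of_norm_bounded (summable_abs_bessel x) (fun k => ?_)
  rw [Real.norm_eq_abs, abs_div, abs_mul, abs_pow, abs_pow, abs_neg, abs_one, one_pow, one_mul,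
    abs_of_pos (c_pos k)]

lemma summable_besselI1 (x : ℝ) :
    Summable (fun k : ℕ => x ^ (1 + 2*k) /
      (2 ^ (1 + 2*k) * (k.factorial : ℝ) * ((k+1).factorial : ℝ))) := by
  refine Summable.of_norm_bounded (summable_abs_bessel x) (fun k => ?_)
  rw [Real.norm_eq_abs, abs_div, abs_pow, abs_of_pos (c_pos k)]

lemma besselI1_ge (y : ℝ) (hy : 0 ≤ y) : y / 2 ≤ besselI1 y := by
  have h0 : y ^ (1 + 2*0) / (2 ^ (1 + 2*0) * ((0:ℕ).factorial : ℝ) * ((0+1).factorial : ℝ)) = y / 2 := by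
    norm_num [Nat.factorial]
  rw [besselI1, ← h0]
  exact Summable.le_tsum (summable_besselI1 y) 0 (fun k _ => by positivity)

lemma bessel_pair (x : ℝ) (hx : 0 ≤ x) (hx2 : x^2 ≤ 24) (j : ℕ) :
    (-1:ℝ) ^ (2*j+1) * x ^ (1 + 2*(2*j+1)) /
      (2 ^ (1 + 2*(2*j+1)) * ((2*j+1).factorial : ℝ) * ((2*j+1+1).factorial : ℝ))
    + (-1:ℝ) ^ (2*j+2) * x ^ (1 + 2*(2*j+2)) /
      (2 ^ (1 + 2*(2*j+2)) * ((2*j+2).factorial : ℝ) * ((2*j+2+1).factorial : ℝ)) ≤ 0 := by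
  have hs1 : (-1:ℝ) ^ (2*j+1) = -1 := Odd.neg_one_pow ⟨j, by ring⟩
  have hs2 : (-1:ℝ) ^ (2*j+2) = 1 := Even.neg_one_pow ⟨j+1, by ring⟩
  rw [hs1, hs2, neg_one_mul, one_mul, neg_div]
  rw [add_comm, ← sub_eq_add_neg, sub_nonpos]
  have hxp : x ^ (1 + 2*(2*j+2)) = x ^ (1 + 2*(2*j+1)) * x^2 := by
    have h : 1 + 2*(2*j+2) = (1 + 2*(2*j+1)) + 2 := by ring
    rw [h, pow_add]
  have hcp : (2:ℝ) ^ (1 + 2*(2*j+2)) = 2 ^ (1 + 2*(2*j+1)) * 4 := by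
    have h : 1 + 2*(2*j+2) = (1 + 2*(2*j+1)) + 2 := by ring
    rw [h, pow_add]; norm_num
  have hf1 : ((2*j+2).factorial : ℝ) = (2*(j:ℝ)+2) * ((2*j+1).factorial : ℝ) := by
    have : (2*j+2).factorial = (2*j+2) * (2*j+1).factorial := Nat.factorial_succ (2*j+1)
    rw [this]; push_cast; ring
  have hf2 : ((2*j+2+1).factorial : ℝ) = (2*(j:ℝ)+3) * ((2*j+1+1).factorial : ℝ) := by
    have : (2*j+2+1).factorial = (2*j+3) * (2*j+2).factorial := Nat.factorial_succ (2*j+2)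
    rw [this]; push_cast; ring
  rw [div_le_div_iff₀ (c_pos (2*j+2)) (c_pos (2*j+1))]
  rw [hxp, hcp, hf1, hf2]
  have h1 : (0:ℝ) < 2 ^ (1 + 2*(2*j+1)) := by positivity
  have h2 : (0:ℝ) < ((2*j+1).factorial : ℝ) := by positivity
  have h3 : (0:ℝ) < ((2*j+1+1).factorial : ℝ) := by positivity
  have hxm : (0:ℝ) ≤ x ^ (1 + 2*(2*j+1)) * (2 ^ (1 + 2*(2*j+1)) * ((2*j+1).factorial:ℝ) * ((2*j+1+1).factorial:ℝ)) := by
    positivity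
  nlinarith [mul_nonneg hxm (sq_nonneg (j:ℝ)), mul_nonneg hxm (Nat.cast_nonneg j), hxm,
    mul_le_mul_of_nonneg_left hx2 hxm]

lemma besselJ1_le (x : ℝ) (hx : 0 ≤ x) (hx2 : x^2 ≤ 24) : besselJ1 x ≤ x/2 := by
  set a : ℕ → ℝ := fun k => (-1:ℝ) ^ k * x ^ (1 + 2*k) /
    (2 ^ (1 + 2*k) * (k.factorial : ℝ) * ((k+1).factorial : ℝ)) with ha
  have hsa : Summable a := summable_besselJ1 x
  have h0 : a 0 = x / 2 := by
    simp [ha, Nat.factorial]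
  have hinj1 : Function.Injective (fun j : ℕ => 2*j+1) := fun p q h => by simpa using h
  have hinj2 : Function.Injective (fun j : ℕ => 2*j+2) := fun p q h => by simpa using h
  have hs1 : Summable (fun j : ℕ => a (2*j+1)) := hsa.comp_injective hinj1
  have hs2 : Summable (fun j : ℕ => a (2*j+2)) := hsa.comp_injective hinj2
  have hJ : besselJ1 x = ∑' k, a k := rfl
  rw [hJ, Summable.tsum_eq_zero_add hsa, h0]
  have key : ∑' k, a (k+1) ≤ 0 := by
    calc ∑' k, a (k+1) = (∑' j, a (2*j+1)) + ∑' j, a (2*j+2) :=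
          (tsum_even_add_odd (f := fun k => a (k+1)) hs1 hs2).symm
      _ = ∑' j, (a (2*j+1) + a (2*j+2)) := (Summable.tsum_add hs1 hs2).symm
      _ ≤ 0 := tsum_nonpos (fun j => bessel_pair x hx hx2 j)
  linarith

lemma prod_formula (n : ℕ) : ∏ i ∈ Finset.range n, ((2*(i:ℝ)+1)/(2*(i:ℝ)+2))
    = ((2*n).factorial : ℝ) / (4^n * ((n.factorial : ℝ))^2) := by
  induction n with
  | zero => simp [Nat.factorial]
  | succ n ih =>
    rw [Finset.prod_range_succ, ih]
    have h1 : (2*(n+1)).factorial = (2*n+2) * ((2*n+1) * (2*n).factorial) := by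
      have e : 2*(n+1) = (2*n+1) + 1 := by ring
      rw [e, Nat.factorial_succ, Nat.factorial_succ]
    have h2 : (n+1).factorial = (n+1) * n.factorial := Nat.factorial_succ n
    rw [h1, h2]
    have hf : ((2*n).factorial : ℝ) ≠ 0 := by positivity
    have hnf : ((n.factorial : ℝ)) ≠ 0 := by positivity
    have h4 : (4:ℝ)^n ≠ 0 := by positivity
    push_cast
    field_simp
    ring

lemma integral_cos_part (x : ℝ) :
    ∫ θ in (0:ℝ)..π, Real.cos θ * Real.cos (x * Real.sin θ) = 0 := by
  have h := intervalIntegral.integral_comp_sub_left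
    (fun θ => Real.cos θ * Real.cos (x * Real.sin θ)) π (a := 0) (b := π)
  simp only [sub_self, sub_zero] at h
  have hcongr : (∫ θ in (0:ℝ)..π, Real.cos (π - θ) * Real.cos (x * Real.sin (π - θ)))
      = ∫ θ in (0:ℝ)..π, -(Real.cos θ * Real.cos (x * Real.sin θ)) := by
    apply intervalIntegral.integral_congr
    intro θ _
    simp only []
    rw [Real.cos_pi_sub, Real.sin_pi_sub]
    ring
  rw [hcongr, intervalIntegral.integral_neg] at h
  linarith

lemma integral_sin_part (x : ℝ) :
    ∫ θ in (0:ℝ)..π, Real.sin θ * Real.sin (x * Real.sin θ) = π * besselJ1 x := by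
  set F : ℕ → C(ℝ, ℝ) := fun k =>
    ⟨fun θ => Real.sin θ * ((-1:ℝ)^k * (x * Real.sin θ)^(2*k+1) / (((2*k+1).factorial : ℕ) : ℝ)),
     by fun_prop⟩ with hF
  have hfac : ∀ k : ℕ, (0:ℝ) < (((2*k+1).factorial : ℕ) : ℝ) := fun k => by positivity
  have hb : ∀ (k : ℕ) (θ : ℝ), ‖F k θ‖ ≤ |x|^(2*k+1) / (((2*k+1).factorial : ℕ) : ℝ) := by
    intro k θ
    simp only [hF, ContinuousMap.coe_mk, Real.norm_eq_abs]
    rw [abs_mul, abs_div, abs_mul, abs_pow, abs_pow, abs_neg, abs_one, one_pow, one_mul,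
      abs_of_pos (hfac k)]
    have h1 : |Real.sin θ| ≤ 1 := Real.abs_sin_le_one θ
    have h2 : |x * Real.sin θ| ^ (2*k+1) ≤ |x| ^ (2*k+1) := by
      apply pow_le_pow_left₀ (abs_nonneg _)
      rw [abs_mul]
      nlinarith [abs_nonneg x, abs_nonneg (Real.sin θ)]
    calc |Real.sin θ| * (|x * Real.sin θ| ^ (2*k+1) / (((2*k+1).factorial : ℕ) : ℝ))
        ≤ 1 * (|x| ^ (2*k+1) / (((2*k+1).factorial : ℕ) : ℝ)) := by
          apply mul_le_mul h1 _ (by positivity) zero_le_one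
          exact div_le_div_of_nonneg_right h2 (hfac k).le
      _ = |x| ^ (2*k+1) / (((2*k+1).factorial : ℕ) : ℝ) := one_mul _
  have hbdsum : Summable (fun k : ℕ => |x|^(2*k+1) / (((2*k+1).factorial : ℕ) : ℝ)) := by
    have hinj : Function.Injective (fun j : ℕ => 2*j+1) := fun p q h => by simpa using h
    exact (Real.summable_pow_div_factorial |x|).comp_injective hinj
  have hsum_norm : Summable (fun k : ℕ =>
      ‖(F k).restrict (⟨Set.uIcc (0:ℝ) π, isCompact_uIcc⟩ : TopologicalSpace.Compacts ℝ)‖) := by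
    refine Summable.of_nonneg_of_le (fun k => norm_nonneg _) (fun k => ?_) hbdsum
    rw [ContinuousMap.norm_le _ (by positivity)]
    intro pt
    exact hb k pt
  have key := intervalIntegral.tsum_intervalIntegral_eq_of_summable_norm
    (a := (0:ℝ)) (b := π) hsum_norm
  have hpt : ∀ θ : ℝ, (∑' k, F k θ) = Real.sin θ * Real.sin (x * Real.sin θ) := by
    intro θ
    have hs := (Real.hasSum_sin (x * Real.sin θ)).mul_left (Real.sin θ)
    exact hs.tsum_eq
  have hterm : ∀ k : ℕ, (∫ θ in (0:ℝ)..π, F k θ) =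
      π * ((-1:ℝ)^k * x^(1+2*k) / (2^(1+2*k) * (k.factorial : ℝ) * ((k+1).factorial : ℝ))) := by
    intro k
    have h1 : ∀ θ : ℝ, F k θ =
        ((-1:ℝ)^k * x^(2*k+1) / (((2*k+1).factorial : ℕ) : ℝ)) * Real.sin θ^(2*(k+1)) := by
      intro θ
      simp only [hF, ContinuousMap.coe_mk]
      rw [mul_pow]
      ring
    calc (∫ θ in (0:ℝ)..π, F k θ)
        = ∫ θ in (0:ℝ)..π, ((-1:ℝ)^k * x^(2*k+1) / (((2*k+1).factorial : ℕ) : ℝ)) *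
            Real.sin θ^(2*(k+1)) := by
          exact intervalIntegral.integral_congr (fun θ _ => h1 θ)
      _ = ((-1:ℝ)^k * x^(2*k+1) / (((2*k+1).factorial : ℕ) : ℝ)) *
            ∫ θ in (0:ℝ)..π, Real.sin θ^(2*(k+1)) := intervalIntegral.integral_const_mul _ _
      _ = ((-1:ℝ)^k * x^(2*k+1) / (((2*k+1).factorial : ℕ) : ℝ)) *
            (π * (((2*(k+1)).factorial : ℝ) / (4^(k+1) * (((k+1).factorial : ℝ))^2))) := by
          rw [integral_sin_pow_even, prod_formula]
      _ = π * ((-1:ℝ)^k * x^(1+2*k) / (2^(1+2*k) * (k.factorial : ℝ) * ((k+1).factorial : ℝ))) := by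
          have e1 : x^(2*k+1) = x^(1+2*k) := by rw [add_comm]
          have e2 : ((2*(k+1)).factorial : ℝ) = (2*(k:ℝ)+2) * (((2*k+1).factorial : ℕ) : ℝ) := by
            have e : 2*(k+1) = (2*k+1) + 1 := by ring
            rw [e, Nat.factorial_succ]
            push_cast; ring
          have e3 : ((k+1).factorial : ℝ) = ((k:ℝ)+1) * (k.factorial : ℝ) := by
            rw [Nat.factorial_succ]; push_cast; ring
          have e4 : (2:ℝ)^(1+2*k) = 2*4^k := by
            rw [pow_add, pow_one, pow_mul]; norm_num
          have e5 : (4:ℝ)^(k+1) = 4*4^k := by rw [pow_succ]; ring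
          rw [e1, e2, e3, e4, e5]
          have n1 : (((2*k+1).factorial : ℕ) : ℝ) ≠ 0 := by positivity
          have n2 : (k.factorial : ℝ) ≠ 0 := by positivity
          have n3 : (4:ℝ)^k ≠ 0 := by positivity
          field_simp
          ring
  calc (∫ θ in (0:ℝ)..π, Real.sin θ * Real.sin (x * Real.sin θ))
      = ∫ θ in (0:ℝ)..π, (∑' k, F k θ) := by
        exact (intervalIntegral.integral_congr (fun θ _ => hpt θ)).symm
    _ = ∑' k, ∫ θ in (0:ℝ)..π, F k θ := key.symm
    _ = ∑' k, π * ((-1:ℝ)^k * x^(1+2*k) /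
          (2^(1+2*k) * (k.factorial : ℝ) * ((k+1).factorial : ℝ))) := tsum_congr hterm
    _ = π * besselJ1 x := tsum_mul_left


lemma abs_besselJ1_le_one (x : ℝ) : |besselJ1 x| ≤ 1 := by
  have hrep : π * besselJ1 x = ∫ θ in (0:ℝ)..π, Real.cos (θ - x * Real.sin θ) := by
    have hsplit : (∫ θ in (0:ℝ)..π, Real.cos (θ - x * Real.sin θ))
        = (∫ θ in (0:ℝ)..π, Real.cos θ * Real.cos (x * Real.sin θ))
          + ∫ θ in (0:ℝ)..π, Real.sin θ * Real.sin (x * Real.sin θ) := by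
      rw [← intervalIntegral.integral_add]
      · apply intervalIntegral.integral_congr
        intro θ _
        simp only []
        rw [Real.cos_sub]
      · exact (Continuous.mul Real.continuous_cos
          (Real.continuous_cos.comp (continuous_const.mul Real.continuous_sin))).intervalIntegrable 0 π
      · exact (Continuous.mul Real.continuous_sin
          (Real.continuous_sin.comp (continuous_const.mul Real.continuous_sin))).intervalIntegrable 0 π
    rw [hsplit, integral_cos_part, integral_sin_part, zero_add]
  have hbound : ‖∫ θ in (0:ℝ)..π, Real.cos (θ - x * Real.sin θ)‖ ≤ 1 * |π - 0| := by
    apply intervalIntegral.norm_integral_le_of_norm_le_const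
    intro θ _
    rw [Real.norm_eq_abs]
    exact Real.abs_cos_le_one _
  rw [Real.norm_eq_abs, ← hrep, abs_mul, abs_of_pos Real.pi_pos] at hbound
  rw [sub_zero, abs_of_pos Real.pi_pos, one_mul] at hbound
  calc |besselJ1 x| = (π * |besselJ1 x|) / π := by field_simp
    _ ≤ π / π := by apply div_le_div_of_nonneg_right hbound Real.pi_pos.le
    _ = 1 := by field_simp

theorem bessel_inequality (β x : ℝ) (hβ : 0 < β) (hx0 : 0 ≤ x) (hxβ : x ≤ β) :
    Real.sqrt (β^2 - x^2) * besselJ1 x ≤ x * besselI1 (Real.sqrt (β^2 - x^2)) := by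
  set y := Real.sqrt (β^2 - x^2) with hy
  have hy0 : 0 ≤ y := Real.sqrt_nonneg _
  have hI : y / 2 ≤ besselI1 y := besselI1_ge y hy0
  rcases le_or_gt (x^2) 24 with h24 | h24
  · have hJ : besselJ1 x ≤ x / 2 := besselJ1_le x hx0 h24
    calc y * besselJ1 x ≤ y * (x/2) := mul_le_mul_of_nonneg_left hJ hy0
      _ = x * (y/2) := by ring
      _ ≤ x * besselI1 y := mul_le_mul_of_nonneg_left hI hx0
  · have hJ : besselJ1 x ≤ 1 := (abs_le.1 (abs_besselJ1_le_one x)).2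
    have hx2 : (2:ℝ) ≤ x := by nlinarith
    calc y * besselJ1 x ≤ y * 1 := mul_le_mul_of_nonneg_left hJ hy0
      _ = y := mul_one y
      _ ≤ x * (y/2) := by nlinarith
      _ ≤ x * besselI1 y := mul_le_mul_of_nonneg_left hI hx0
end

section
/- Let I = (-a, a) with a > 0 and let φ ∈ L¹(I) with weak derivatives D^j φ ∈ L¹(I) for j = 1, ..., k, and one-sided boundary values φ^{(j)}(±a) = 0 for j = 0, ..., k-1. Define f(z) = ∫_I φ(t) e^{-2πizt} dt for z ∈ ℂ. Then for all z ∈ ℂ and j = 0, ..., k: |2πz|^j |f(z)| ≤ (∫_I |(D^j φ)(t)| dt) · e^{2πa|Im z|}. Consequently (1 + |2πz|)^k |f(z)| ≤ γ_k(φ) e^{2πa|Im z|} with γ_k(φ) = ∑_{j=0}^k binom(k,j) ∫_I |(D^j φ)(t)| dt. -/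
open Real MeasureTheory intervalIntegral

theorem paley_wiener_sobolev_estimate (a : ℝ) (ha : 0 < a) (k : ℕ)
    (Dφ : ℕ → ℝ → ℂ)
    (hint : ∀ j ≤ k, IntervalIntegrable (Dφ j) volume (-a) a)
    (hcont : ∀ j ≤ k, ContinuousOn (Dφ j) (Set.Icc (-a) a))
    (hderiv : ∀ j < k, ∀ t ∈ Set.Ioo (-a) a, HasDerivAt (Dφ j) (Dφ (j+1) t) t)
    (hbdry : ∀ j < k, Dφ j (-a) = 0 ∧ Dφ j a = 0)
    (f : ℂ → ℂ)
    (hf : ∀ z : ℂ, f z = ∫ t in (-a)..a,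
      Dφ 0 t * Complex.exp (-2 * (π : ℂ) * Complex.I * z * t)) :
    (∀ z : ℂ, ∀ j ≤ k, ‖2 * (π : ℂ) * z‖ ^ j * ‖f z‖ ≤
        (∫ t in (-a)..a, ‖Dφ j t‖) * Real.exp (2 * π * a * |z.im|)) ∧
    (∀ z : ℂ, (1 + ‖2 * (π : ℂ) * z‖) ^ k * ‖f z‖ ≤
        (∑ j ∈ Finset.range (k+1), (k.choose j : ℝ) * ∫ t in (-a)..a, ‖Dφ j t‖) *
          Real.exp (2 * π * a * |z.im|)) := by
  have hle : (-a : ℝ) ≤ a := by linarith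
  have huIcc : (Set.uIcc (-a) a) = Set.Icc (-a) a := Set.uIcc_of_le hle
  have hmin : min (-a) a = -a := min_eq_left hle
  have hmax : max (-a) a = a := max_eq_right hle
  -- exponential derivative
  have hEderiv : ∀ (z : ℂ) (t : ℝ),
      HasDerivAt (fun t : ℝ => Complex.exp (-2 * (π : ℂ) * Complex.I * z * t))
        ((-2 * (π : ℂ) * Complex.I * z) * Complex.exp (-2 * (π : ℂ) * Complex.I * z * t)) t := by
    intro z t
    have h1 : HasDerivAt (fun t : ℝ => -2 * (π : ℂ) * Complex.I * z * (t : ℂ))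
        (-2 * (π : ℂ) * Complex.I * z) t := by
      simpa using (Complex.ofRealCLM.hasDerivAt (x := t)).const_mul (-2 * (π : ℂ) * Complex.I * z)
    simpa [mul_comm] using h1.cexp
  have hEcont : ∀ z : ℂ, Continuous (fun t : ℝ =>
      Complex.exp (-2 * (π : ℂ) * Complex.I * z * t)) := by
    intro z
    exact Complex.continuous_exp.comp (by continuity)
  -- key identity
  have key : ∀ z : ℂ, ∀ j ≤ k,
      (2 * (π : ℂ) * Complex.I * z) ^ j * f z
        = ∫ t in (-a)..a, Dφ j t * Complex.exp (-2 * (π : ℂ) * Complex.I * z * t) := by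
    intro z j hj
    induction j with
    | zero => simp only [pow_zero, one_mul]; exact hf z
    | succ j ih =>
      have hj' : j < k := hj
      have ihv := ih (le_of_lt hj')
      set c : ℂ := -2 * (π : ℂ) * Complex.I * z with hc
      set E : ℝ → ℂ := fun t => Complex.exp (c * t) with hE
      have hEc : ContinuousOn E (Set.uIcc (-a) a) := (hEcont z).continuousOn
      have hint1 : IntervalIntegrable (fun t => Dφ (j+1) t * E t) volume (-a) a :=
        (hint (j+1) hj).mul_continuousOn hEc
      have hint2 : IntervalIntegrable (fun t => Dφ j t * (c * E t)) volume (-a) a :=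
        (hint j (le_of_lt hj')).mul_continuousOn (by exact (continuous_const.mul (hEcont z)).continuousOn)
      have ibp := intervalIntegral.integral_deriv_mul_eq_sub_of_hasDerivAt
        (u := Dφ j) (v := E) (u' := Dφ (j+1)) (v' := fun t => c * E t)
        (by rw [huIcc]; exact hcont j (le_of_lt hj')) hEc
        (by rw [hmin, hmax]; exact hderiv j hj')
        (by rw [hmin, hmax]; intro x hx; exact hEderiv z x)
        (hint (j+1) hj) ((continuous_const.mul (hEcont z)).intervalIntegrable _ _)
      rw [(hbdry j hj').1, (hbdry j hj').2] at ibp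
      simp only [zero_mul, sub_zero, sub_self] at ibp
      rw [intervalIntegral.integral_add hint1 hint2] at ibp
      have h2 : (∫ t in (-a)..a, Dφ j t * (c * E t))
          = c * ∫ t in (-a)..a, Dφ j t * E t := by
        rw [← intervalIntegral.integral_const_mul]
        congr 1; ext t; ring
      have h3 : (∫ t in (-a)..a, Dφ (j+1) t * E t)
          = -c * ∫ t in (-a)..a, Dφ j t * E t := by
        rw [h2] at ibp; linear_combination ibp
      rw [h3, ← ihv]
      have : -c = 2 * (π : ℂ) * Complex.I * z := by rw [hc]; ring
      rw [this]; ring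
  -- norm bound
  have hbound : ∀ z : ℂ, ∀ j ≤ k,
      ‖∫ t in (-a)..a, Dφ j t * Complex.exp (-2 * (π : ℂ) * Complex.I * z * t)‖
        ≤ (∫ t in (-a)..a, ‖Dφ j t‖) * Real.exp (2 * π * a * |z.im|) := by
    intro z j hj
    set C : ℝ := Real.exp (2 * π * a * |z.im|) with hCdef
    have hCpos : 0 < C := Real.exp_pos _
    have hgint : IntervalIntegrable (fun t => ‖Dφ j t‖ * C) volume (-a) a :=
      ((hint j hj).norm).mul_const C
    have hptwise : ∀ t ∈ Set.uIoc (-a) a,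
        ‖Dφ j t * Complex.exp (-2 * (π : ℂ) * Complex.I * z * t)‖ ≤ ‖Dφ j t‖ * C := by
      intro t ht
      rw [Set.uIoc_of_le hle] at ht
      have hta : |t| ≤ a := by
        rw [abs_le]; exact ⟨le_of_lt ht.1, ht.2⟩
      rw [norm_mul]
      apply mul_le_mul_of_nonneg_left _ (norm_nonneg _)
      rw [Complex.norm_exp]
      apply Real.exp_le_exp.mpr
      have hre : (-2 * (π : ℂ) * Complex.I * z * t).re = 2 * π * t * z.im := by
        simp [Complex.mul_re, Complex.mul_im]; ring
      rw [hre]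
      have h1 : t * z.im ≤ |t| * |z.im| := le_trans (le_abs_self _) (by rw [abs_mul])
      have h2 : |t| * |z.im| ≤ a * |z.im| :=
        mul_le_mul_of_nonneg_right hta (abs_nonneg _)
      nlinarith [Real.pi_pos]
    have hae : ∀ᵐ t ∂(volume.restrict (Set.uIoc (-a) a)),
        ‖Dφ j t * Complex.exp (-2 * (π : ℂ) * Complex.I * z * t)‖ ≤ ‖Dφ j t‖ * C :=
      (ae_restrict_iff' measurableSet_uIoc).mpr (Filter.Eventually.of_forall hptwise)
    have := intervalIntegral.norm_integral_le_abs_of_norm_le hae hgint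
    calc ‖∫ t in (-a)..a, Dφ j t * Complex.exp (-2 * (π : ℂ) * Complex.I * z * t)‖
          ≤ |∫ t in (-a)..a, ‖Dφ j t‖ * C| := this
        _ = ∫ t in (-a)..a, ‖Dφ j t‖ * C := by
            rw [abs_of_nonneg]
            apply intervalIntegral.integral_nonneg hle
            intro t _; positivity
        _ = (∫ t in (-a)..a, ‖Dφ j t‖) * C := by
            rw [intervalIntegral.integral_mul_const]
  constructor
  · intro z j hj
    have hnorm : ‖2 * (π : ℂ) * Complex.I * z‖ = ‖2 * (π : ℂ) * z‖ := by
      rw [show (2 * (π : ℂ) * Complex.I * z) = Complex.I * (2 * (π : ℂ) * z) by ring,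
        norm_mul, Complex.norm_I, one_mul]
    calc ‖2 * (π : ℂ) * z‖ ^ j * ‖f z‖
        = ‖(2 * (π : ℂ) * Complex.I * z) ^ j * f z‖ := by
          rw [← hnorm, ← norm_pow, ← norm_mul]
      _ ≤ _ := by rw [key z j hj]; exact hbound z j hj
  · intro z
    have part1 : ∀ j ≤ k, ‖2 * (π : ℂ) * z‖ ^ j * ‖f z‖ ≤
        (∫ t in (-a)..a, ‖Dφ j t‖) * Real.exp (2 * π * a * |z.im|) := by
      intro j hj
      have hnorm : ‖2 * (π : ℂ) * Complex.I * z‖ = ‖2 * (π : ℂ) * z‖ := by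
        rw [show (2 * (π : ℂ) * Complex.I * z) = Complex.I * (2 * (π : ℂ) * z) by ring,
          norm_mul, Complex.norm_I, one_mul]
      calc ‖2 * (π : ℂ) * z‖ ^ j * ‖f z‖
          = ‖(2 * (π : ℂ) * Complex.I * z) ^ j * f z‖ := by
            rw [← hnorm, ← norm_pow, ← norm_mul]
        _ ≤ _ := by rw [key z j hj]; exact hbound z j hj
    set x : ℝ := ‖2 * (π : ℂ) * z‖ with hx
    have hexpand : (1 + x) ^ k = ∑ j ∈ Finset.range (k+1), (k.choose j : ℝ) * x ^ j := by
      rw [add_comm, add_pow]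
      apply Finset.sum_congr rfl
      intro j hj; ring
    rw [hexpand, Finset.sum_mul, Finset.sum_mul]
    apply Finset.sum_le_sum
    intro j hj
    have hjk : j ≤ k := Nat.lt_succ_iff.mp (Finset.mem_range.mp hj)
    have := part1 j hjk
    have hch : (0:ℝ) ≤ (k.choose j : ℝ) := Nat.cast_nonneg _
    calc (k.choose j : ℝ) * x ^ j * ‖f z‖ = (k.choose j : ℝ) * (x ^ j * ‖f z‖) := by ring
      _ ≤ (k.choose j : ℝ) * ((∫ t in (-a)..a, ‖Dφ j t‖) * Real.exp (2 * π * a * |z.im|)) :=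
          mul_le_mul_of_nonneg_left this hch
      _ = (k.choose j : ℝ) * (∫ t in (-a)..a, ‖Dφ j t‖) * Real.exp (2 * π * a * |z.im|) := by ring
end

section
/- Let σ ≥ 1, b ∈ ℝ with 2σb ≥ 3, and 2b > 1. For every real u with |u| ≤ 1/(2σb), it holds (1/(2σb))^{2b} · ∑_{r ∈ ℤ \ {0}} |u + r|^{-2b} ≤ (4b/(2b-1)) · (2σb - 1)^{-2b}. -/
open Real

lemma zeta_tail_bound_aux {b : ℝ} (hb : 1 < 2*b) :
    ∑' n : ℕ, ((n : ℝ) + 2) ^ (-(2*b)) ≤ 1/(2*b-1) := by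
  have hb1 : 0 < 2*b - 1 := by linarith
  apply tsum_le_of_sum_range_le (fun n => by positivity)
  intro N
  have hanti : AntitoneOn (fun x : ℝ => x ^ (-(2*b))) (Set.Icc (1:ℝ) (1 + (N:ℝ))) := by
    intro x hx y hy hxy
    exact Real.rpow_le_rpow_of_nonpos (lt_of_lt_of_le one_pos hx.1) hxy (by linarith)
  have hsum := hanti.sum_le_integral
  have heq : ∀ i : ℕ, ((i:ℝ) + 2) ^ (-(2*b))
      = (fun x : ℝ => x ^ (-(2*b))) (1 + ((i + 1 : ℕ) : ℝ)) := by
    intro i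
    simp only []
    congr 1
    push_cast
    ring
  calc ∑ i ∈ Finset.range N, ((i:ℝ) + 2) ^ (-(2*b))
      = ∑ i ∈ Finset.range N, (fun x : ℝ => x ^ (-(2*b))) (1 + ((i + 1 : ℕ) : ℝ)) :=
        Finset.sum_congr rfl (fun i _ => heq i)
    _ ≤ ∫ x in (1:ℝ)..(1 + (N:ℝ)), x ^ (-(2*b)) := hsum
    _ ≤ 1/(2*b-1) := by
        rw [integral_rpow (Or.inr ⟨by intro h; apply absurd h; intro h'; nlinarith,
          Set.notMem_uIcc_of_lt one_pos (by positivity)⟩)]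
        rw [Real.one_rpow]
        have ht : (0:ℝ) ≤ (1 + (N:ℝ)) ^ (-(2*b) + 1) := by positivity
        have hrw : ((1 + (N:ℝ)) ^ (-(2*b) + 1) - 1) / (-(2*b) + 1)
            = (1 - (1 + (N:ℝ)) ^ (-(2*b) + 1)) / (2*b - 1) := by
          rw [div_eq_div_iff (by linarith) (by linarith)]
          ring
        rw [hrw]
        gcongr
        linarith

theorem modified_Bspline_error_bound (σ b : ℝ) (hσ : 1 ≤ σ) (hb : 1 < 2*b)
    (h3 : 3 ≤ 2*σ*b) (u : ℝ) (hu : |u| ≤ 1/(2*σ*b)) :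
    (1/(2*σ*b)) ^ (2*b) *
        (∑' r : ℤ, if r = 0 then (0 : ℝ) else |u + (r : ℝ)| ^ (-(2*b)))
      ≤ 4*b/(2*b - 1) * (2*σ*b - 1) ^ (-(2*b)) := by
  have hb1 : 0 < 2*b - 1 := by linarith
  have hbpos : 0 < 2*b := by linarith
  have hc0 : (0:ℝ) < 2*σ*b := by linarith
  have hc1 : (2:ℝ) ≤ 2*σ*b - 1 := by linarith
  have hc1' : (0:ℝ) < 2*σ*b - 1 := by linarith
  -- summability of the majorant over ℤ
  have hH : Summable (fun r : ℤ => |(r:ℝ)| ^ (-(2*b))) := Real.summable_abs_int_rpow hb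
  -- pointwise bound
  have key : ∀ r : ℤ, (1/(2*σ*b))^(2*b) * (if r = 0 then (0:ℝ) else |u + (r:ℝ)| ^ (-(2*b)))
      ≤ (2*σ*b-1)^(-(2*b)) * |(r:ℝ)| ^ (-(2*b)) := by
    intro r
    by_cases hr : r = 0
    · subst hr
      have h0 : (if (0:ℤ) = 0 then (0:ℝ) else |u + ((0:ℤ):ℝ)| ^ (-(2*b))) = 0 := if_pos rfl
      rw [h0, mul_zero, Int.cast_zero, abs_zero,
        Real.zero_rpow (show -(2*b) ≠ 0 by intro h; linarith), mul_zero]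
    · rw [if_neg hr]
      have hrabs : (1:ℝ) ≤ |(r:ℝ)| := by
        rw [← Int.cast_abs]
        exact_mod_cast Int.one_le_abs (by simpa using hr)
      have hcu : (2*σ*b) * |u| ≤ 1 := by
        have := mul_le_mul_of_nonneg_left hu hc0.le
        rwa [mul_one_div, div_self hc0.ne'] at this
      have h1 : |(r:ℝ)| - |u| ≤ |u + (r:ℝ)| := by
        have h := abs_sub_abs_le_abs_sub (r:ℝ) (-u)
        simp only [abs_neg, sub_neg_eq_add] at h
        rwa [add_comm] at h
      have hur : (2*σ*b-1) * |(r:ℝ)| ≤ (2*σ*b) * |u + (r:ℝ)| := by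
        have h2 := mul_le_mul_of_nonneg_left h1 hc0.le
        have h3 : (2*σ*b) * |u| ≤ |(r:ℝ)| := by nlinarith
        nlinarith
      have hupos : 0 < |u + (r:ℝ)| := by nlinarith
      have lhs_eq : (1/(2*σ*b))^(2*b) * |u + (r:ℝ)| ^ (-(2*b))
          = ((2*σ*b) * |u + (r:ℝ)|) ^ (-(2*b)) := by
        rw [Real.mul_rpow hc0.le (abs_nonneg _), one_div, Real.inv_rpow hc0.le,
          ← Real.rpow_neg hc0.le]
      have rhs_eq : (2*σ*b-1)^(-(2*b)) * |(r:ℝ)| ^ (-(2*b))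
          = ((2*σ*b-1) * |(r:ℝ)|) ^ (-(2*b)) := by
        rw [Real.mul_rpow hc1'.le (abs_nonneg _)]
      rw [lhs_eq, rhs_eq]
      exact Real.rpow_le_rpow_of_nonpos (by nlinarith) hur (by linarith)
  -- summability of the lhs summand
  have hFnonneg : ∀ r : ℤ,
      0 ≤ (1/(2*σ*b))^(2*b) * (if r = 0 then (0:ℝ) else |u + (r:ℝ)| ^ (-(2*b))) := by
    intro r
    have : 0 ≤ (if r = 0 then (0:ℝ) else |u + (r:ℝ)| ^ (-(2*b))) := by
      split <;> positivity
    positivity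
  have hGsum : Summable (fun r : ℤ => (2*σ*b-1)^(-(2*b)) * |(r:ℝ)| ^ (-(2*b))) :=
    hH.mul_left _
  have hFsum : Summable (fun r : ℤ =>
      (1/(2*σ*b))^(2*b) * (if r = 0 then (0:ℝ) else |u + (r:ℝ)| ^ (-(2*b)))) :=
    Summable.of_nonneg_of_le hFnonneg key hGsum
  -- bound the int sum of the majorant
  have hnat : Summable (fun n : ℕ => (n:ℝ) ^ (-(2*b))) :=
    Real.summable_nat_rpow.mpr (by linarith)
  have hnat1 : Summable (fun n : ℕ => ((n:ℝ)+1) ^ (-(2*b))) := by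
    have := (summable_nat_add_iff 1).mpr hnat
    simpa [Nat.cast_add] using this
  have hnat2 : Summable (fun n : ℕ => ((n:ℝ)+2) ^ (-(2*b))) := by
    have := (summable_nat_add_iff 2).mpr hnat
    simpa [Nat.cast_add] using this
  have hS : ∑' r : ℤ, |(r:ℝ)| ^ (-(2*b)) ≤ 4*b/(2*b-1) := by
    have hgn : (fun n : ℕ => |((n:ℤ):ℝ)| ^ (-(2*b))) = fun n : ℕ => (n:ℝ) ^ (-(2*b)) := by
      funext n
      rw [Int.cast_natCast, abs_of_nonneg (Nat.cast_nonneg n)]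
    have hgm : (fun n : ℕ => |((-(n+1) : ℤ):ℝ)| ^ (-(2*b))) = fun n : ℕ => ((n:ℝ)+1) ^ (-(2*b)) := by
      funext n
      push_cast
      rw [abs_neg, abs_of_nonneg (by positivity)]
    rw [tsum_of_nat_of_neg_add_one (by rw [hgn]; exact hnat) (by rw [hgm]; exact hnat1),
      hgn, hgm]
    have hA : ∑' n : ℕ, (n:ℝ) ^ (-(2*b)) = ∑' n : ℕ, ((n:ℝ)+1) ^ (-(2*b)) := by
      rw [Summable.tsum_eq_zero_add hnat]
      rw [Nat.cast_zero, Real.zero_rpow (by linarith), zero_add]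
      congr 1
      funext n
      push_cast
      ring_nf
    have hB : ∑' n : ℕ, ((n:ℝ)+1) ^ (-(2*b)) ≤ 1 + 1/(2*b-1) := by
      rw [Summable.tsum_eq_zero_add hnat1]
      have h0 : ((0:ℕ):ℝ) + 1 = 1 := by norm_num
      rw [h0, Real.one_rpow]
      have hfun : (fun n : ℕ => (((n+1:ℕ):ℝ) + 1) ^ (-(2*b)))
          = fun n : ℕ => ((n:ℝ)+2) ^ (-(2*b)) := by
        funext n
        congr 1
        push_cast
        ring
      rw [hfun]
      linarith [zeta_tail_bound_aux hb]
    rw [hA]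
    have h2 : (1 + 1/(2*b-1)) + (1 + 1/(2*b-1)) = 4*b/(2*b-1) := by
      field_simp
      ring
    linarith
  -- put it together
  calc (1/(2*σ*b)) ^ (2*b) *
        (∑' r : ℤ, if r = 0 then (0 : ℝ) else |u + (r : ℝ)| ^ (-(2*b)))
      = ∑' r : ℤ, (1/(2*σ*b))^(2*b) * (if r = 0 then (0:ℝ) else |u + (r:ℝ)| ^ (-(2*b))) :=
        (tsum_mul_left).symm
    _ ≤ ∑' r : ℤ, (2*σ*b-1)^(-(2*b)) * |(r:ℝ)| ^ (-(2*b)) := Summable.tsum_le_tsum key hFsum hGsum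
    _ = (2*σ*b-1)^(-(2*b)) * ∑' r : ℤ, |(r:ℝ)| ^ (-(2*b)) := tsum_mul_left
    _ ≤ (2*σ*b-1)^(-(2*b)) * (4*b/(2*b-1)) := by
        have hp : (0:ℝ) ≤ (2*σ*b-1)^(-(2*b)) := by positivity
        exact mul_le_mul_of_nonneg_left hS hp
    _ = 4*b/(2*b - 1) * (2*σ*b - 1) ^ (-(2*b)) := mul_comm _ _
end

section
/- For all x > 0 the modified Bessel function I₀ satisfies e^x/(1 + 2x) < I₀(x) < e^x/√(1 + 2x). Consequently, for σ ∈ [5/4, 2] and m ≥ 2, with t = 2πm√(1 - 1/σ), one has (21/4)·(I₀(t) - 1/2)^{-1} ≤ (21/4)·(1 + 2t)·(e^t - (1 + 2t)/2)^{-1} whenever e^t > (1+2t)/2. -/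
open Real

/-- Modified Bessel function of the first kind of order 0, via its power series. -/
noncomputable def besselI0 (x : ℝ) : ℝ :=
  ∑' k : ℕ, x ^ (2*k) / (4^k * (k.factorial : ℝ)^2)

namespace BesselAux

lemma lemA (n : ℕ) : (Nat.centralBinom n)^2 * (2*n+1) ≤ 16^n := by
  induction n with
  | zero => simp [Nat.centralBinom_zero]
  | succ n ih =>
    have key := Nat.succ_mul_centralBinom_succ n
    have hcancel : (n+1)^2 * ((Nat.centralBinom (n+1))^2 * (2*(n+1)+1)) ≤ (n+1)^2 * 16^(n+1) := by
      calc (n+1)^2 * ((Nat.centralBinom (n+1))^2 * (2*(n+1)+1))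
          = ((n+1) * Nat.centralBinom (n+1))^2 * (2*n+3) := by ring
        _ = (2*(2*n+1) * Nat.centralBinom n)^2 * (2*n+3) := by rw [key]
        _ = (4*(2*n+1)*(2*n+3)) * ((Nat.centralBinom n)^2 * (2*n+1)) := by ring
        _ ≤ (4*(2*n+1)*(2*n+3)) * 16^n := Nat.mul_le_mul_left _ ih
        _ ≤ ((n+1)^2 * 16) * 16^n := Nat.mul_le_mul_right _ (by nlinarith)
        _ = (n+1)^2 * 16^(n+1) := by ring
    exact Nat.le_of_mul_le_mul_left hcancel (by positivity)

lemma lemB (n : ℕ) : 16^n * (2*n+2) ≤ 2 * (Nat.centralBinom n)^2 * (2*n+1)^2 := by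
  induction n with
  | zero => simp [Nat.centralBinom_zero]
  | succ n ih =>
    have key := Nat.succ_mul_centralBinom_succ n
    have hcancel : ((n+1)^2*(2*n+2)) * (16^(n+1) * (2*(n+1)+2)) ≤
        ((n+1)^2*(2*n+2)) * (2 * (Nat.centralBinom (n+1))^2 * (2*(n+1)+1)^2) := by
      calc ((n+1)^2*(2*n+2)) * (16^(n+1) * (2*(n+1)+2))
          = (16^n * (2*n+2)) * (16*(2*n+4)*(n+1)^2) := by ring
        _ ≤ (2 * (Nat.centralBinom n)^2 * (2*n+1)^2) * (16*(2*n+4)*(n+1)^2) :=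
            Nat.mul_le_mul_right _ ih
        _ ≤ (2 * (Nat.centralBinom n)^2 * (2*n+1)^2) * (4*(2*n+3)^2*(2*n+2)) :=
            Nat.mul_le_mul_left _ (by nlinarith)
        _ = (2*(2*n+1) * Nat.centralBinom n)^2 * (2*(2*n+3)^2*(2*n+2)) := by ring
        _ = ((n+1) * Nat.centralBinom (n+1))^2 * (2*(2*n+3)^2*(2*n+2)) := by rw [key]
        _ = ((n+1)^2*(2*n+2)) * (2 * (Nat.centralBinom (n+1))^2 * (2*(n+1)+1)^2) := by ring
    exact Nat.le_of_mul_le_mul_left hcancel (by positivity)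

-- Cb n * n! * n! = (2n)!

lemma cb_fact (n : ℕ) : Nat.centralBinom n * n.factorial * n.factorial = (2*n).factorial := by
  have := Nat.choose_mul_factorial_mul_factorial (Nat.le_mul_of_pos_left n (by norm_num) : n ≤ 2*n)
  simpa [Nat.centralBinom, two_mul, Nat.add_sub_cancel] using this

lemma cb_le (n : ℕ) : Nat.centralBinom n ≤ 4^n := by
  by_contra h
  push_neg at h
  have h2 : (4^n)^2 * 1 < (Nat.centralBinom n)^2 * (2*n+1) :=
    Nat.mul_lt_mul_of_lt_of_le (Nat.pow_lt_pow_left h (by norm_num)) (by omega) (by positivity)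
  have := lemA n
  have h16 : (16:ℕ)^n = (4^n)^2 := by rw [← pow_mul, pow_mul']; norm_num
  omega

lemma NB1core (n : ℕ) : 16^n ≤ 2 * (Nat.centralBinom n)^2 * (2*n+1) := by
  have h := lemB n
  have : 16^n * (2*n+1) ≤ (2 * (Nat.centralBinom n)^2 * (2*n+1)) * (2*n+1) := by
    calc 16^n * (2*n+1) ≤ 16^n * (2*n+2) := by gcongr <;> omega
      _ ≤ 2 * (Nat.centralBinom n)^2 * (2*n+1)^2 := h
      _ = (2 * (Nat.centralBinom n)^2 * (2*n+1)) * (2*n+1) := by ring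
  exact Nat.le_of_mul_le_mul_right this (by omega)

lemma NB2core (n : ℕ) : 16^n ≤ (Nat.centralBinom n)^2 * (2*n+1) * (2*n+2) := by
  have h := lemB n
  have : 16^n * (2*n+2) ≤ ((Nat.centralBinom n)^2 * (2*n+1) * (2*n+2)) * (2*n+2) := by
    calc 16^n * (2*n+2) ≤ 2 * (Nat.centralBinom n)^2 * (2*n+1)^2 := h
      _ = ((Nat.centralBinom n)^2 * (2*n+1)) * (2*(2*n+1)) := by ring
      _ ≤ ((Nat.centralBinom n)^2 * (2*n+1)) * ((2*n+2)*(2*n+2)) :=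
          Nat.mul_le_mul_left _ (by nlinarith)
      _ = ((Nat.centralBinom n)^2 * (2*n+1) * (2*n+2)) * (2*n+2) := by ring
  exact Nat.le_of_mul_le_mul_right this (by omega)

lemma NB1 (n : ℕ) : 16^n * n.factorial * n.factorial ≤ 2 * Nat.centralBinom n * (2*n+1).factorial := by
  have h := NB1core n
  calc 16^n * n.factorial * n.factorial
      ≤ (2 * (Nat.centralBinom n)^2 * (2*n+1)) * n.factorial * n.factorial :=
        Nat.mul_le_mul_right _ (Nat.mul_le_mul_right _ h)
    _ = 2 * Nat.centralBinom n * (2*n+1).factorial := by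
        rw [Nat.factorial_succ, ← cb_fact n]; ring

lemma NB2 (n : ℕ) : 16^n * n.factorial * n.factorial ≤ Nat.centralBinom n * (2*n+2).factorial := by
  have h := NB2core n
  calc 16^n * n.factorial * n.factorial
      ≤ ((Nat.centralBinom n)^2 * (2*n+1) * (2*n+2)) * n.factorial * n.factorial :=
        Nat.mul_le_mul_right _ (Nat.mul_le_mul_right _ h)
    _ = Nat.centralBinom n * (2*n+2).factorial := by
        have : (2*n+2).factorial = (2*n+2) * ((2*n+1) * (2*n).factorial) := by
          rw [show 2*n+2 = (2*n+1)+1 by ring, Nat.factorial_succ, Nat.factorial_succ]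
        rw [this, ← cb_fact n]; ring

lemma sum_choose_sq (n : ℕ) :
    ∑ k ∈ Finset.range (n+1), (n.choose k)^2 = Nat.centralBinom n := by
  rw [Nat.centralBinom, two_mul, Nat.add_choose_eq,
    Finset.Nat.sum_antidiagonal_eq_sum_range_succ (fun i j => n.choose i * n.choose j)]
  refine Finset.sum_congr rfl fun k hk => ?_
  rw [Nat.choose_symm (Nat.lt_succ_iff.mp (Finset.mem_range.mp hk))]
  ring

lemma NA1 (n : ℕ) : Nat.centralBinom n * (2*n).factorial ≤ 16^n * n.factorial * n.factorial := by
  have h := lemA n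
  calc Nat.centralBinom n * (2*n).factorial
      = (Nat.centralBinom n)^2 * n.factorial * n.factorial := by rw [← cb_fact n]; ring
    _ ≤ ((Nat.centralBinom n)^2 * (2*n+1)) * n.factorial * n.factorial := by
        have : (Nat.centralBinom n)^2 ≤ (Nat.centralBinom n)^2 * (2*n+1) :=
          Nat.le_mul_of_pos_right _ (by omega)
        exact Nat.mul_le_mul_right _ (Nat.mul_le_mul_right _ this)
    _ ≤ 16^n * n.factorial * n.factorial := by
        exact Nat.mul_le_mul_right _ (Nat.mul_le_mul_right _ h)

lemma NA2 (n : ℕ) : Nat.centralBinom n * (2*n+1).factorial ≤ 16^n * n.factorial * n.factorial := by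
  have h := lemA n
  calc Nat.centralBinom n * (2*n+1).factorial
      = (Nat.centralBinom n)^2 * (2*n+1) * n.factorial * n.factorial := by
        rw [Nat.factorial_succ, ← cb_fact n]; ring
    _ ≤ 16^n * n.factorial * n.factorial :=
        Nat.mul_le_mul_right _ (Nat.mul_le_mul_right _ h)

noncomputable def bf (x : ℝ) (k : ℕ) : ℝ := x^(2*k) / (4^k * ((k.factorial:ℝ))^2)

noncomputable def bc (n : ℕ) : ℝ := (Nat.centralBinom n : ℝ) / (4^n * ((n.factorial:ℝ))^2)

lemma bf_nonneg (x : ℝ) (k : ℕ) : 0 ≤ bf x k := by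
  unfold bf
  have : x^(2*k) = (x^2)^k := by rw [pow_mul]
  rw [this]
  positivity

lemma bf_eq (x : ℝ) (k : ℕ) : bf x k = (x^2/4)^k / (k.factorial:ℝ)^2 := by
  unfold bf
  rw [pow_mul, div_pow]
  field_simp

lemma bf_summable (x : ℝ) : Summable (bf x) := by
  have h := Real.summable_pow_div_factorial (x^2/4)
  refine Summable.of_nonneg_of_le (bf_nonneg x) (fun k => ?_) h
  rw [bf_eq]
  have h1 : (1:ℝ) ≤ (k.factorial:ℝ) := by exact_mod_cast k.factorial_pos
  have h2 : (0:ℝ) < (k.factorial:ℝ) := by positivity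
  have h3 : (k.factorial:ℝ) ≤ (k.factorial:ℝ)^2 := by nlinarith
  exact div_le_div_of_nonneg_left (by positivity) h2 h3

lemma besselI0_eq (x : ℝ) : besselI0 x = ∑' k, bf x k := rfl

lemma bc_nonneg (n : ℕ) : 0 ≤ bc n := by unfold bc; positivity

lemma bf_mul (x : ℝ) {k n : ℕ} (hk : k ≤ n) :
    bf x k * bf x (n - k) = ((n.choose k : ℝ))^2 * (x^(2*n) / (4^n * ((n.factorial:ℝ))^2)) := by
  unfold bf
  have hfac : ((n.choose k : ℝ)) * (k.factorial:ℝ) * ((n-k).factorial:ℝ) = (n.factorial:ℝ) := by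
    exact_mod_cast Nat.choose_mul_factorial_mul_factorial hk
  have hxp : x^(2*k) * x^(2*(n-k)) = x^(2*n) := by
    rw [← pow_add]; congr 1; omega
  have h4 : (4:ℝ)^k * 4^(n-k) = 4^n := by
    rw [← pow_add]; congr 1; omega
  rw [div_mul_div_comm, hxp]
  rw [show (4:ℝ)^k * (k.factorial:ℝ)^2 * (4^(n-k) * ((n-k).factorial:ℝ)^2)
      = (4^k * 4^(n-k)) * ((k.factorial:ℝ)^2 * ((n-k).factorial:ℝ)^2) by ring, h4]
  have hn2 : ((n.factorial:ℝ))^2 = ((n.choose k:ℝ))^2 * ((k.factorial:ℝ)^2 * ((n-k).factorial:ℝ)^2) := by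
    rw [← hfac]; ring
  rw [hn2]
  have hc0 : ((n.choose k:ℝ)) ≠ 0 := by
    have := Nat.choose_pos hk; positivity
  field_simp

lemma besselI0_sq (x : ℝ) : (besselI0 x)^2 = ∑' n, bc n * x^(2*n) := by
  rw [besselI0_eq, sq]
  have habs : Summable fun k => ‖bf x k‖ := by
    have : (fun k => ‖bf x k‖) = bf x := by
      funext k; exact Real.norm_of_nonneg (bf_nonneg x k)
    rw [this]; exact bf_summable x
  rw [tsum_mul_tsum_eq_tsum_sum_range_of_summable_norm habs habs]
  congr 1
  funext n
  rw [Finset.sum_congr rfl (fun k hk => bf_mul x (Nat.lt_succ_iff.mp (Finset.mem_range.mp hk)))]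
  rw [← Finset.sum_mul]
  have hs : ∑ k ∈ Finset.range (n+1), ((n.choose k:ℝ))^2 = (Nat.centralBinom n : ℝ) := by
    rw [← sum_choose_sq n]; push_cast; ring
  rw [hs]
  unfold bc
  ring

lemma sixteen (n : ℕ) : (16:ℝ)^n = 4^n * 4^n := by rw [← mul_pow]; norm_num

lemma cA1 (n : ℕ) : bc n ≤ 4^n / ((2*n).factorial:ℝ) := by
  unfold bc
  rw [div_le_div_iff₀ (by positivity) (by positivity)]
  have h := NA1 n
  have : ((Nat.centralBinom n : ℝ)) * ((2*n).factorial:ℝ) ≤ 16^n * (n.factorial:ℝ) * (n.factorial:ℝ) := by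
    exact_mod_cast h
  rw [sixteen] at this
  nlinarith [this]

lemma cA2 (n : ℕ) : bc n ≤ 4^n / ((2*n+1).factorial:ℝ) := by
  unfold bc
  rw [div_le_div_iff₀ (by positivity) (by positivity)]
  have : ((Nat.centralBinom n : ℝ)) * ((2*n+1).factorial:ℝ) ≤ 16^n * (n.factorial:ℝ) * (n.factorial:ℝ) := by
    exact_mod_cast NA2 n
  rw [sixteen] at this
  nlinarith [this]

lemma cB1 (n : ℕ) : 4^n / ((2*n+1).factorial:ℝ) ≤ 2 * bc n := by
  unfold bc
  rw [mul_div_assoc']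
  rw [div_le_div_iff₀ (by positivity) (by positivity)]
  have : (16:ℝ)^n * (n.factorial:ℝ) * (n.factorial:ℝ) ≤ 2 * (Nat.centralBinom n : ℝ) * ((2*n+1).factorial:ℝ) := by
    exact_mod_cast NB1 n
  rw [sixteen] at this
  nlinarith [this]

lemma cB2 (n : ℕ) : 4^n / ((2*n+2).factorial:ℝ) ≤ bc n := by
  unfold bc
  rw [div_le_div_iff₀ (by positivity) (by positivity)]
  have : (16:ℝ)^n * (n.factorial:ℝ) * (n.factorial:ℝ) ≤ (Nat.centralBinom n : ℝ) * ((2*n+2).factorial:ℝ) := by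
    exact_mod_cast NB2 n
  rw [sixteen] at this
  nlinarith [this]

lemma bc_nonneg' (n : ℕ) : 0 ≤ bc n := by unfold bc; positivity

lemma bc_summable (x : ℝ) : Summable (fun n => bc n * x^(2*n)) := by
  refine Summable.of_nonneg_of_le (fun n => ?_) (fun n => ?_) (Real.summable_pow_div_factorial (x^2))
  · have : x^(2*n) = (x^2)^n := by rw [pow_mul]
    rw [this]
    exact mul_nonneg (bc_nonneg' n) (by positivity)
  · have hx : x^(2*n) = (x^2)^n := by rw [pow_mul]
    rw [hx]
    unfold bc
    have hle : ((Nat.centralBinom n : ℝ)) ≤ 4^n := by exact_mod_cast cb_le n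
    have h1 : (1:ℝ) ≤ (n.factorial:ℝ) := by exact_mod_cast n.factorial_pos
    rw [div_mul_eq_mul_div, div_le_div_iff₀ (by positivity) (by positivity)]
    have hxn : (0:ℝ) ≤ (x^2)^n := by positivity
    have hF0 : (0:ℝ) ≤ (n.factorial:ℝ) := by positivity
    have h4 : (0:ℝ) ≤ (4:ℝ)^n := by positivity
    calc (Nat.centralBinom n : ℝ) * (x^2)^n * (n.factorial:ℝ)
        ≤ 4^n * (x^2)^n * (n.factorial:ℝ) := by gcongr
      _ ≤ 4^n * (x^2)^n * ((n.factorial:ℝ) * (n.factorial:ℝ)) := by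
          nlinarith [mul_nonneg (mul_nonneg (mul_nonneg h4 hxn) hF0) (sub_nonneg.2 h1)]
      _ = (x^2)^n * (4^n * ((n.factorial:ℝ))^2) := by ring

-- even/odd exp machinery

lemma exp_tsum (y : ℝ) : Real.exp y = ∑' n, y^n / (n.factorial:ℝ) := by
  rw [Real.exp_eq_exp_ℝ, NormedSpace.exp_eq_tsum_div]

lemma heven (y : ℝ) : Summable (fun k => y^(2*k) / ((2*k).factorial:ℝ)) := by
  have hinj : Function.Injective (fun k : ℕ => 2*k) := fun a b h => by dsimp only at h; omega
  have h := (Real.summable_pow_div_factorial y).comp_injective hinj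
  exact h

lemma hodd (y : ℝ) : Summable (fun k => y^(2*k+1) / ((2*k+1).factorial:ℝ)) := by
  have hinj : Function.Injective (fun k : ℕ => 2*k+1) := fun a b h => by dsimp only at h; omega
  have h := (Real.summable_pow_div_factorial y).comp_injective hinj
  exact h

lemma exp_split (y : ℝ) :
    Real.exp y = ∑' n, (y^(2*n) / ((2*n).factorial:ℝ) + y^(2*n+1) / ((2*n+1).factorial:ℝ)) := by
  have key := tsum_even_add_odd (f := fun n => y^n / (n.factorial:ℝ)) (heven y) (hodd y)
  rw [exp_tsum, ← key,
    ← Summable.tsum_add (heven y) (hodd y)]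

lemma pow_even_nonneg (x : ℝ) (n : ℕ) : 0 ≤ x^(2*n) := by
  rw [pow_mul]; positivity

lemma p1 (x : ℝ) (n : ℕ) : (2*x)^(2*n) = 4^n * x^(2*n) := by
  rw [mul_pow, pow_mul]; norm_num

lemma p2 (x : ℝ) (n : ℕ) : (2*x)^(2*n+1) = 2*(4^n * x^(2*n)) * x := by
  rw [pow_succ, p1]; ring

lemma upper (x : ℝ) (hx : 0 < x) : (1+2*x) * (besselI0 x)^2 < Real.exp (2*x) := by
  rw [besselI0_sq, ← tsum_mul_left, exp_split (2*x)]
  refine Summable.tsum_lt_tsum (i := 1) (fun n => ?_) ?_ ((bc_summable x).mul_left _)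
    ((heven (2*x)).add (hodd (2*x)))
  · rw [p1, p2]
    have X0 := pow_even_nonneg x n
    have hfe : (0:ℝ) < ((2*n).factorial:ℝ) := by positivity
    have hfo : (0:ℝ) < ((2*n+1).factorial:ℝ) := by positivity
    have h1 := mul_le_mul_of_nonneg_right (cA1 n) X0
    have h2 := mul_le_mul_of_nonneg_right (cA2 n) (mul_nonneg X0 hx.le)
    ring_nf at h1 h2 ⊢
    linarith
  · rw [p1, p2]
    have hbc1 : bc 1 = 1/2 := by
      norm_num [bc, Nat.centralBinom, Nat.factorial]
    rw [hbc1]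
    norm_num [Nat.factorial]
    nlinarith [hx, sq_nonneg x, pow_pos hx 2]

noncomputable def esh (x : ℝ) (n : ℕ) : ℝ :=
  if n = 0 then 0 else (bc (n-1) * x^(2*(n-1))) * (4*x^2)

lemma esh_summable (x : ℝ) : Summable (esh x) := by
  have h : (fun n => esh x (n+1)) = fun n => (bc n * x^(2*n)) * (4*x^2) := by
    funext n; simp [esh]
  exact (summable_nat_add_iff 1).mp (h ▸ ((bc_summable x).mul_right _))

lemma esh_tsum (x : ℝ) : ∑' n, esh x n = ∑' n, (bc n * x^(2*n)) * (4*x^2) := by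
  rw [Summable.tsum_eq_zero_add (esh_summable x)]
  simp [esh]

lemma lower (x : ℝ) (hx : 0 < x) : Real.exp (2*x) < (1+2*x)^2 * (besselI0 x)^2 := by
  rw [besselI0_sq, ← tsum_mul_left, exp_split (2*x)]
  have hw : ∑' n, (1+2*x)^2 * (bc n * x^(2*n))
      = ∑' n, ((bc n * x^(2*n)) * (1+4*x) + esh x n) := by
    calc ∑' n, (1+2*x)^2 * (bc n * x^(2*n))
        = ∑' n, ((bc n * x^(2*n)) * (1+4*x) + (bc n * x^(2*n)) * (4*x^2)) :=
          tsum_congr (fun n => by ring)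
      _ = (∑' n, (bc n * x^(2*n)) * (1+4*x)) + ∑' n, (bc n * x^(2*n)) * (4*x^2) :=
          Summable.tsum_add ((bc_summable x).mul_right _) ((bc_summable x).mul_right _)
      _ = (∑' n, (bc n * x^(2*n)) * (1+4*x)) + ∑' n, esh x n := by rw [esh_tsum]
      _ = ∑' n, ((bc n * x^(2*n)) * (1+4*x) + esh x n) :=
          (Summable.tsum_add ((bc_summable x).mul_right _) (esh_summable x)).symm
  rw [hw]
  have hsum2 : Summable (fun n => (bc n * x^(2*n)) * (1+4*x) + esh x n) :=
    ((bc_summable x).mul_right _).add (esh_summable x)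
  refine Summable.tsum_lt_tsum (i := 0) (fun n => ?_) ?_ ((heven (2*x)).add (hodd (2*x))) hsum2
  · match n with
    | 0 =>
      have hbc0 : bc 0 = 1 := by norm_num [bc, Nat.centralBinom, Nat.factorial]
      simp [esh, hbc0, Nat.factorial]
      nlinarith [hx]
    | (m+1) =>
      rw [p1, p2]
      have heq : esh x (m+1) = (bc m * x^(2*m)) * (4*x^2) := by simp [esh]
      rw [heq]
      have hxp : x^(2*(m+1)) = x^(2*m) * x^2 := by ring
      have X0 := pow_even_nonneg x m
      have X0' := pow_even_nonneg x (m+1)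
      have h1 := mul_le_mul_of_nonneg_right (cB2 m) (mul_nonneg X0 (sq_nonneg x))
      have h2 := mul_le_mul_of_nonneg_right (cB1 (m+1)) (mul_nonneg X0' hx.le)
      have hb := mul_nonneg (bc_nonneg (m+1)) X0'
      have h4p : (0:ℝ) < 4^(m+1) := by positivity
      rw [hxp] at h2 ⊢
      ring_nf at h1 h2 hb ⊢
      nlinarith [hx.le, sq_nonneg x, X0, hb]
  · have hbc0 : bc 0 = 1 := by norm_num [bc, Nat.centralBinom, Nat.factorial]
    simp [esh, hbc0, Nat.factorial]
    nlinarith [hx]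

lemma besselI0_pos (x : ℝ) : 0 < besselI0 x := by
  have h1 : bf x 0 ≤ besselI0 x := Summable.le_tsum (bf_summable x) 0 (fun j _ => bf_nonneg x j)
  have h0 : bf x 0 = 1 := by norm_num [bf, Nat.factorial]
  linarith

lemma main_bounds (x : ℝ) (hx : 0 < x) :
    Real.exp x / (1 + 2*x) < besselI0 x ∧
    besselI0 x < Real.exp x / Real.sqrt (1 + 2*x) := by
  have h12 : (0:ℝ) < 1 + 2*x := by linarith
  have hexp2 : Real.exp (2*x) = Real.exp x ^ 2 := by
    rw [sq, ← Real.exp_add]; ring_nf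
  constructor
  · have hl := lower x hx
    rw [hexp2] at hl
    have h2 : Real.exp x ^ 2 < ((1+2*x) * besselI0 x)^2 := by
      rw [mul_pow]; linarith
    have h3 : Real.exp x < (1+2*x) * besselI0 x :=
      lt_of_pow_lt_pow_left₀ 2 (mul_pos h12 (BesselAux.besselI0_pos x)).le h2
    rw [div_lt_iff₀ h12]
    linarith [h3]
  · have hu := upper x hx
    have hs : Real.sqrt (1+2*x) ^ 2 = 1+2*x := Real.sq_sqrt h12.le
    have hsqpos : 0 < Real.sqrt (1+2*x) := Real.sqrt_pos.mpr h12
    have h2 : (besselI0 x)^2 < (Real.exp x / Real.sqrt (1+2*x))^2 := by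
      rw [div_pow, hs, ← hexp2, lt_div_iff₀ h12]
      linarith
    exact lt_of_pow_lt_pow_left₀ 2 (by positivity) h2

end BesselAux

theorem besselI0_two_sided_bound_and_consequence :
    (∀ x : ℝ, 0 < x →
      Real.exp x / (1 + 2*x) < besselI0 x ∧
      besselI0 x < Real.exp x / Real.sqrt (1 + 2*x)) ∧
    (∀ σ : ℝ, σ ∈ Set.Icc (5/4 : ℝ) 2 → ∀ m : ℕ, 2 ≤ m → ∀ t : ℝ,
      t = 2*π*m*Real.sqrt (1 - 1/σ) → (1 + 2*t)/2 < Real.exp t →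
      21/4 * (besselI0 t - 1/2)⁻¹ ≤
        21/4 * (1 + 2*t) * (Real.exp t - (1 + 2*t)/2)⁻¹) := by
  refine ⟨fun x hx => BesselAux.main_bounds x hx, ?_⟩
  intro σ hσ m hm t ht hexp
  have hσ1 : (5/4:ℝ) ≤ σ := hσ.1
  have hσpos : (0:ℝ) < σ := by linarith
  have hfrac : 1/σ ≤ 4/5 := by
    rw [div_le_div_iff₀ hσpos (by norm_num)]; linarith
  have hs : 0 < 1 - 1/σ := by linarith
  have hm2 : (0:ℝ) < (m:ℝ) := by
    have : (2:ℝ) ≤ (m:ℝ) := by exact_mod_cast hm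
    linarith
  have ht0 : 0 < t := by
    rw [ht]
    exact mul_pos (mul_pos (mul_pos (by norm_num : (0:ℝ) < 2) Real.pi_pos) hm2) (Real.sqrt_pos.mpr hs)
  have h12 : (0:ℝ) < 1 + 2*t := by linarith
  have hlow := (BesselAux.main_bounds t ht0).1
  have hBpos : 0 < Real.exp t - (1+2*t)/2 := by linarith
  have hquo : (Real.exp t - (1+2*t)/2)/(1+2*t) ≤ besselI0 t - 1/2 := by
    have heq : Real.exp t/(1+2*t) - 1/2 = (Real.exp t - (1+2*t)/2)/(1+2*t) := by
      rw [sub_div]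
      congr 1
      field_simp
    linarith [hlow, heq.le, heq.ge]
  have hqpos : 0 < (Real.exp t - (1+2*t)/2)/(1+2*t) := div_pos hBpos h12
  have hinv : (besselI0 t - 1/2)⁻¹ ≤ ((Real.exp t - (1+2*t)/2)/(1+2*t))⁻¹ :=
    inv_anti₀ hqpos hquo
  rw [inv_div] at hinv
  calc 21/4 * (besselI0 t - 1/2)⁻¹
      ≤ 21/4 * ((1+2*t)/(Real.exp t - (1+2*t)/2)) := by linarith [hinv]
    _ = 21/4 * (1 + 2*t) * (Real.exp t - (1 + 2*t)/2)⁻¹ := by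
        rw [div_eq_mul_inv]; ring
end
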